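/- For every positive integer m, the number of subgroups of ℤ × ℤ of index m equals σ₁(m) = ∑_{d∣m} d. -/

import Mathlib

/-- The subgroup of `ℤ × ℤ` generated by `(a,0)` and `(c,d)`. -/
def Hsub (a c d : ℤ) : AddSubgroup (ℤ × ℤ) := AddSubgroup.closure {(a, 0), (c, d)}

lemma mem_Hsub {a c d : ℤ} {z : ℤ × ℤ} :
    z ∈ Hsub a c d ↔ ∃ x y : ℤ, (x * a + y * c, y * d) = z := by
  rw [Hsub, AddSubgroup.mem_closure_pair]
  constructor
  · rintro ⟨x, y, rfl⟩
    exact ⟨x, y, by simp [Prod.ext_iff, smul_eq_mul]⟩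
  · rintro ⟨x, y, rfl⟩
    exact ⟨x, y, by simp [Prod.ext_iff, smul_eq_mul]⟩

lemma index_Hsub {a d : ℕ} (ha : 0 < a) (hd : 0 < d) (c : ℤ) :
    (Hsub (a : ℤ) c (d : ℤ)).index = a * d := by
  have ha' : (0:ℤ) < a := by exact_mod_cast ha
  have hd' : (0:ℤ) < d := by exact_mod_cast hd
  rw [AddSubgroup.index]
  have : Nat.card (Fin a × Fin d) = a * d := by simp
  rw [← this]
  apply Nat.card_congr
  apply Equiv.symm
  apply Equiv.ofBijective (f := fun p : Fin a × Fin d =>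
    (QuotientAddGroup.mk ((p.1 : ℤ), (p.2 : ℤ)) : (ℤ × ℤ) ⧸ Hsub (a : ℤ) c (d : ℤ)))
  constructor
  · rintro ⟨i, j⟩ ⟨i', j'⟩ h
    rw [QuotientAddGroup.eq] at h
    obtain ⟨x, y, hxy⟩ := mem_Hsub.mp h
    rw [Prod.ext_iff] at hxy
    simp only [Prod.fst_add, Prod.snd_add, Prod.fst_neg, Prod.snd_neg] at hxy
    obtain ⟨h1, h2⟩ := hxy
    have hy : y = 0 := by
      have hj : (j : ℤ) < d := by exact_mod_cast j.2
      have hj' : (j' : ℤ) < d := by exact_mod_cast j'.2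
      nlinarith [Int.ofNat_nonneg j.val, Int.ofNat_nonneg j'.val]
    subst hy
    simp only [zero_mul, add_zero] at h1 h2
    have hx : x = 0 := by
      have hi : (i : ℤ) < a := by exact_mod_cast i.2
      have hi' : (i' : ℤ) < a := by exact_mod_cast i'.2
      nlinarith [Int.ofNat_nonneg i.val, Int.ofNat_nonneg i'.val]
    subst hx
    simp only [zero_mul, add_zero] at h1
    have hii : i = i' := by apply Fin.ext; omega
    have hjj : j = j' := by apply Fin.ext; omega
    rw [hii, hjj]
  · intro q
    obtain ⟨⟨u, v⟩, rfl⟩ := QuotientAddGroup.mk_surjective q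
    set y := v / (d : ℤ) with hy
    set v' := v % (d : ℤ) with hv'
    set x := (u - y * c) / (a : ℤ) with hx
    set u' := (u - y * c) % (a : ℤ) with hu'
    have hv0 : 0 ≤ v' := Int.emod_nonneg v (by positivity)
    have hvd : v' < d := Int.emod_lt_of_pos v hd'
    have hu0 : 0 ≤ u' := Int.emod_nonneg _ (by positivity)
    have hua : u' < a := Int.emod_lt_of_pos _ ha'
    refine ⟨(⟨u'.toNat, by omega⟩, ⟨v'.toNat, by omega⟩), ?_⟩
    rw [QuotientAddGroup.eq]
    apply mem_Hsub.mpr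
    refine ⟨x, y, ?_⟩
    have h1 : u = x * a + y * c + u' := by
      have := Int.mul_ediv_add_emod (u - y * c) (a : ℤ)
      rw [hx, hu']
      linarith [this]
    have h2 : v = y * d + v' := by
      have := Int.mul_ediv_add_emod v (d : ℤ)
      rw [hy, hv']
      linarith [this]
    ext
    · show x * a + y * c = -(u'.toNat : ℤ) + u
      rw [Int.toNat_of_nonneg hu0]
      linarith [h1]
    · show y * d = -(v'.toNat : ℤ) + v
      rw [Int.toNat_of_nonneg hv0]
      linarith [h2]

lemma a_mem_Hsub (a c d : ℤ) : (a, 0) ∈ Hsub a c d :=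
  mem_Hsub.mpr ⟨1, 0, by ring_nf⟩

lemma cd_mem_Hsub (a c d : ℤ) : (c, d) ∈ Hsub a c d :=
  mem_Hsub.mpr ⟨0, 1, by ring_nf⟩

/-- Uniqueness of the parametrization. -/
lemma Hsub_inj {a a' d d' : ℕ} {c c' : ℤ} (ha : 0 < a) (ha' : 0 < a') (hd : 0 < d)
    (hd' : 0 < d') (hc0 : 0 ≤ c) (hca : c < a) (hc0' : 0 ≤ c') (hca' : c' < a')
    (heq : Hsub (a : ℤ) c (d : ℤ) = Hsub (a' : ℤ) c' (d' : ℤ)) :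
    a = a' ∧ c = c' ∧ d = d' := by
  have hA : (0:ℤ) < a := by exact_mod_cast ha
  have hA' : (0:ℤ) < a' := by exact_mod_cast ha'
  have hD : (0:ℤ) < d := by exact_mod_cast hd
  have hD' : (0:ℤ) < d' := by exact_mod_cast hd'
  -- a' ∣ a
  have h1 : ((a : ℤ), (0:ℤ)) ∈ Hsub (a' : ℤ) c' (d' : ℤ) := by
    rw [← heq]; exact a_mem_Hsub _ c _
  obtain ⟨x1, y1, hx1⟩ := mem_Hsub.mp h1
  rw [Prod.mk.injEq] at hx1
  obtain ⟨h1a, h1b⟩ := hx1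
  have hy1 : y1 = 0 := by
    rcases mul_eq_zero.mp h1b with h | h
    · exact h
    · exact absurd h (ne_of_gt hD')
  subst hy1
  have hdvd1 : (a' : ℤ) ∣ (a : ℤ) := ⟨x1, by linarith⟩
  have h2 : ((a' : ℤ), (0:ℤ)) ∈ Hsub (a : ℤ) c (d : ℤ) := by
    rw [heq]; exact a_mem_Hsub _ c' _
  obtain ⟨x2, y2, hx2⟩ := mem_Hsub.mp h2
  rw [Prod.mk.injEq] at hx2
  obtain ⟨h2a, h2b⟩ := hx2
  have hy2 : y2 = 0 := by
    rcases mul_eq_zero.mp h2b with h | h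
    · exact h
    · exact absurd h (ne_of_gt hD)
  subst hy2
  have hdvd2 : (a : ℤ) ∣ (a' : ℤ) := ⟨x2, by linarith⟩
  have haa : a = a' := by
    have := Int.dvd_antisymm (le_of_lt hA) (le_of_lt hA') hdvd2 hdvd1
    exact_mod_cast this
  -- d' ∣ d
  have h3 : (c, (d:ℤ)) ∈ Hsub (a' : ℤ) c' (d' : ℤ) := by
    rw [← heq]; exact cd_mem_Hsub _ _ _
  obtain ⟨x3, y3, hx3⟩ := mem_Hsub.mp h3
  rw [Prod.mk.injEq] at hx3
  obtain ⟨h3a, h3b⟩ := hx3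
  have hdvd3 : (d' : ℤ) ∣ (d : ℤ) := ⟨y3, by linarith⟩
  have h4 : (c', (d':ℤ)) ∈ Hsub (a : ℤ) c (d : ℤ) := by
    rw [heq]; exact cd_mem_Hsub _ _ _
  obtain ⟨x4, y4, hx4⟩ := mem_Hsub.mp h4
  rw [Prod.mk.injEq] at hx4
  obtain ⟨h4a, h4b⟩ := hx4
  have hdd : d = d' := by
    have := Int.dvd_antisymm (le_of_lt hD) (le_of_lt hD')
      ⟨y4, by linarith⟩ hdvd3
    exact_mod_cast this
  refine ⟨haa, ?_, hdd⟩
  -- c = c'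
  subst haa; subst hdd
  have hy3 : y3 = 1 := by
    have h' : y3 * (d:ℤ) = 1 * (d:ℤ) := by linarith
    exact mul_right_cancel₀ (ne_of_gt hD) h'
  subst hy3
  have hc : c = x3 * a + c' := by linarith
  have hx30 : x3 = 0 := by
    rcases lt_trichotomy x3 0 with hx | hx | hx
    · nlinarith
    · exact hx
    · nlinarith
  rw [hx30] at hc; linarith

lemma int_subgroup_gen_ne_zero {K : AddSubgroup ℤ} (h : K.index ≠ 0) :
    ∃ g : ℤ, g ≠ 0 ∧ K = AddSubgroup.closure {g} := by
  obtain ⟨g, hg⟩ := Int.subgroup_cyclic K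
  refine ⟨g, ?_, hg⟩
  rintro rfl
  rw [AddSubgroup.closure_singleton_zero] at hg
  rw [hg, AddSubgroup.index_bot, Nat.card_eq_zero_of_infinite] at h
  exact h rfl

lemma comap_index_ne_zero {H : AddSubgroup (ℤ × ℤ)} (h : H.index ≠ 0) (f : ℤ →+ ℤ × ℤ) :
    (H.comap f).index ≠ 0 := by
  rw [AddSubgroup.index_comap]
  intro h0
  exact h (Nat.eq_zero_of_zero_dvd (h0 ▸ AddSubgroup.relIndex_dvd_index_of_normal H f.range))

/-- Every finite-index subgroup of `ℤ × ℤ` is of the form `Hsub a c d`. -/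
lemma Hsub_exists {H : AddSubgroup (ℤ × ℤ)} (h : H.index ≠ 0) :
    ∃ (a d : ℕ) (c : ℤ), 0 < a ∧ 0 < d ∧ 0 ≤ c ∧ c < a ∧ H = Hsub (a : ℤ) c (d : ℤ) := by
  -- the subgroup {u : (u, 0) ∈ H}
  obtain ⟨a₀, ha₀, hK1⟩ := int_subgroup_gen_ne_zero
    (comap_index_ne_zero h (AddMonoidHom.inl ℤ ℤ))
  set a : ℕ := a₀.natAbs with ha_def
  have ha : 0 < a := Int.natAbs_pos.mpr ha₀
  have hK1mem : ∀ u : ℤ, (u, (0:ℤ)) ∈ H ↔ a₀ ∣ u := by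
    intro u
    have : (u, (0:ℤ)) ∈ H ↔ u ∈ H.comap (AddMonoidHom.inl ℤ ℤ) := Iff.rfl
    rw [this, hK1, AddSubgroup.mem_closure_singleton]
    constructor
    · rintro ⟨n, rfl⟩; exact ⟨n, by rw [smul_eq_mul]; ring⟩
    · rintro ⟨n, rfl⟩; exact ⟨n, by rw [smul_eq_mul]; ring⟩
  have haH : ((a : ℤ), (0:ℤ)) ∈ H := (hK1mem a).mpr (Int.dvd_natAbs.mpr dvd_rfl)
  -- the image of H under the second projection
  obtain ⟨d₀, hD⟩ := Int.subgroup_cyclic (H.map (AddMonoidHom.snd ℤ ℤ))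
  have hd₀ : d₀ ≠ 0 := by
    obtain ⟨n₀, hn₀, hK2⟩ := int_subgroup_gen_ne_zero
      (comap_index_ne_zero h (AddMonoidHom.inr ℤ ℤ))
    have hn₀H : ((0:ℤ), n₀) ∈ H := by
      have : n₀ ∈ H.comap (AddMonoidHom.inr ℤ ℤ) := by
        rw [hK2]; exact AddSubgroup.mem_closure_singleton.mpr ⟨1, one_smul _ _⟩
      exact this
    have : n₀ ∈ H.map (AddMonoidHom.snd ℤ ℤ) := ⟨((0:ℤ), n₀), hn₀H, rfl⟩
    rw [hD, AddSubgroup.mem_closure_singleton] at this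
    rintro rfl
    obtain ⟨n, hn⟩ := this
    simp at hn
    exact hn₀ hn.symm
  set d : ℕ := d₀.natAbs with hd_def
  have hd : 0 < d := Int.natAbs_pos.mpr hd₀
  have hDmem : ∀ v : ℤ, v ∈ H.map (AddMonoidHom.snd ℤ ℤ) ↔ d₀ ∣ v := by
    intro v
    rw [hD, AddSubgroup.mem_closure_singleton]
    constructor
    · rintro ⟨n, rfl⟩; exact ⟨n, by rw [smul_eq_mul]; ring⟩
    · rintro ⟨n, rfl⟩; exact ⟨n, by rw [smul_eq_mul]; ring⟩
  -- pick an element of H whose second coordinate is d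
  have : ((d : ℤ)) ∈ H.map (AddMonoidHom.snd ℤ ℤ) :=
    (hDmem _).mpr (Int.dvd_natAbs.mpr dvd_rfl)
  obtain ⟨⟨c₁, v⟩, hc₁H, hv⟩ := this
  have hv' : v = (d : ℤ) := hv
  subst hv'
  -- reduce c₁ mod a
  set c : ℤ := c₁ % (a : ℤ) with hc_def
  have hA : (0:ℤ) < a := by exact_mod_cast ha
  have hc0 : 0 ≤ c := Int.emod_nonneg _ (by positivity)
  have hca : c < a := Int.emod_lt_of_pos _ hA
  have hcdH : (c, (d : ℤ)) ∈ H := by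
    have hmul : ((c₁ / (a:ℤ)) * (a:ℤ), (0:ℤ)) ∈ H := by
      have := AddSubgroup.zsmul_mem H haH (c₁ / (a:ℤ))
      simpa [Prod.ext_iff, smul_eq_mul, mul_comm] using this
    have heq : (c, (d:ℤ)) = (c₁, (d:ℤ)) - ((c₁ / (a:ℤ)) * (a:ℤ), (0:ℤ)) := by
      have := Int.mul_ediv_add_emod c₁ (a : ℤ)
      ext
      · show c = c₁ - (c₁ / (a:ℤ)) * (a:ℤ)
        rw [hc_def]; linarith
      · show (d:ℤ) = (d:ℤ) - 0
        ring
    rw [heq]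
    exact AddSubgroup.sub_mem H hc₁H hmul
  refine ⟨a, d, c, ha, hd, hc0, hca, ?_⟩
  apply le_antisymm
  · -- H ≤ Hsub
    intro ⟨u, v⟩ huv
    have hvd : (d : ℤ) ∣ v := by
      have : v ∈ H.map (AddMonoidHom.snd ℤ ℤ) := ⟨(u, v), huv, rfl⟩
      rw [hDmem] at this
      exact (Int.natAbs_dvd.mpr this : (d:ℤ) ∣ v)
    obtain ⟨y, rfl⟩ := hvd
    have hx : (u - y * c, (0:ℤ)) ∈ H := by
      have hy : (y * c, y * (d:ℤ)) ∈ H := by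
        have := AddSubgroup.zsmul_mem H hcdH y
        simpa [Prod.ext_iff, smul_eq_mul] using this
      have : (u - y * c, (0:ℤ)) = (u, (d:ℤ) * y) - (y * c, y * (d:ℤ)) := by
        ext
        · show u - y * c = u - y * c; rfl
        · show (0:ℤ) = (d:ℤ) * y - y * (d:ℤ); ring
      rw [this]
      exact AddSubgroup.sub_mem H huv hy
    rw [hK1mem] at hx
    have hax : (a : ℤ) ∣ u - y * c := Int.natAbs_dvd.mpr hx
    obtain ⟨x, hxx⟩ := hax
    apply mem_Hsub.mpr
    exact ⟨x, y, by rw [Prod.mk.injEq]; constructor <;> linarith⟩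
  · -- Hsub ≤ H
    rw [Hsub]
    apply AddSubgroup.closure_le H |>.mpr
    intro z hz
    rcases hz with h1 | h2
    · rw [h1]; exact haH
    · rw [Set.mem_singleton_iff] at h2; rw [h2]; exact hcdH

/-- The number of subgroups of `ℤ × ℤ` of index `m` equals `σ₁(m) = ∑_{d ∣ m} d`. -/
theorem card_index_m_subgroups_int_sq (m : ℕ) (hm : 0 < m) :
    Nat.card {H : AddSubgroup (ℤ × ℤ) // H.index = m} = ∑ d ∈ m.divisors, d := by
  have hF : ∀ p : (Σ a : {x // x ∈ m.divisors}, Fin a.1),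
      (Hsub ((p.1 : ℕ) : ℤ) ((p.2 : ℕ) : ℤ) (((m / (p.1 : ℕ) : ℕ)) : ℤ)).index = m := by
    intro p
    have ha : 0 < (p.1 : ℕ) := Nat.pos_of_mem_divisors p.1.2
    have hd : 0 < m / (p.1 : ℕ) :=
      Nat.div_pos (Nat.le_of_dvd hm (Nat.dvd_of_mem_divisors p.1.2)) ha
    rw [index_Hsub ha hd]
    exact Nat.mul_div_cancel' (Nat.dvd_of_mem_divisors p.1.2)
  set F : (Σ a : {x // x ∈ m.divisors}, Fin a.1) → {H : AddSubgroup (ℤ × ℤ) // H.index = m} :=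
    fun p => ⟨_, hF p⟩ with hFdef
  have hbij : Function.Bijective F := by
    constructor
    · rintro ⟨⟨a, ham⟩, c⟩ ⟨⟨a', ham'⟩, c'⟩ hpq
      rw [Subtype.ext_iff] at hpq
      simp only [hFdef] at hpq
      have ha : 0 < a := Nat.pos_of_mem_divisors ham
      have ha' : 0 < a' := Nat.pos_of_mem_divisors ham'
      have hd : 0 < m / a := Nat.div_pos (Nat.le_of_dvd hm (Nat.dvd_of_mem_divisors ham)) ha
      have hd' : 0 < m / a' := Nat.div_pos (Nat.le_of_dvd hm (Nat.dvd_of_mem_divisors ham')) ha'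
      have hclt : ((c : ℕ) : ℤ) < (a : ℤ) := by exact_mod_cast c.2
      have hclt' : ((c' : ℕ) : ℤ) < (a' : ℤ) := by exact_mod_cast c'.2
      obtain ⟨h1, h2, h3⟩ := Hsub_inj ha ha' hd hd' (Int.ofNat_nonneg _) hclt
        (Int.ofNat_nonneg _) hclt' hpq
      subst h1
      have : (c : ℕ) = (c' : ℕ) := by exact_mod_cast h2
      have hcc : c = c' := Fin.ext this
      subst hcc
      rfl
    · rintro ⟨H, hH⟩
      have hne : H.index ≠ 0 := by rw [hH]; exact hm.ne'
      obtain ⟨a, d, c, ha, hd, hc0, hca, hHeq⟩ := Hsub_exists hne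
      have hidx : a * d = m := by rw [← hH, hHeq, index_Hsub ha hd]
      have ham : a ∈ m.divisors := Nat.mem_divisors.mpr ⟨⟨d, hidx.symm⟩, hm.ne'⟩
      have hda : d = m / a := by rw [← hidx, Nat.mul_div_cancel_left _ ha]
      subst hda
      have hclt : c.toNat < a := by omega
      refine ⟨⟨⟨a, ham⟩, ⟨c.toNat, hclt⟩⟩, ?_⟩
      apply Subtype.ext
      simp only [hFdef]
      rw [hHeq]
      congr 1
      simp [Int.toNat_of_nonneg hc0]
  calc Nat.card {H : AddSubgroup (ℤ × ℤ) // H.index = m}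
      = Nat.card (Σ a : {x // x ∈ m.divisors}, Fin a.1) :=
        (Nat.card_congr (Equiv.ofBijective F hbij)).symm
    _ = ∑ a : {x // x ∈ m.divisors}, (a : ℕ) := by
        rw [Nat.card_eq_fintype_card, Fintype.card_sigma]
        simp
    _ = ∑ d ∈ m.divisors, d := Finset.sum_coe_sort m.divisors (fun x => x)
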